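/- arXiv:1506.02721 — 5 statements merged into one kernel-verified Lean document; each statement's English description precedes it below -/
import Mathlib

section
/- Computational paths induce a groupoid structure on A: taking as objects the elements of A, as morphisms from a to b the quotient of Path a b by rw-equality, with composition of [s] : a → b and [t] : b → c given by [τ(s,t)], identity at a given by [ρ_a], and inverse of [s] given by [σ(s)], one obtains a groupoid (composition and inversion are well defined on rw-equivalence classes, associativity and the unit laws hold, and every morphism is an isomorphism with inverse [σ(s)]). -/
universe u v

/-- Computational paths between elements of `A`, over a family `R` of basic
rewrite generators: generators, reflexivity `ρ`, symmetry `σ`, transitivity `τ`. -/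
inductive CPath {A : Type u} (R : A → A → Type v) : A → A → Type (max u v)
  | gen {a b : A} : R a b → CPath R a b
  | ρ (a : A) : CPath R a a
  | σ {a b : A} : CPath R a b → CPath R b a
  | τ {a b c : A} : CPath R a b → CPath R b c → CPath R a c

/-- One-step rw-contraction `▷₁rw`: congruence closure (under `σ` and `τ`) of the
seven LND_EQ-TRS rules sr, ss, tr, tsr, trr, tlr, tt. -/
inductive RwStep {A : Type u} {R : A → A → Type v} :
    ∀ {a b : A}, CPath R a b → CPath R a b → Prop
  | sr {a : A} : RwStep (CPath.σ (CPath.ρ a)) (CPath.ρ a)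
  | ss {a b : A} (r : CPath R a b) : RwStep (CPath.σ (CPath.σ r)) r
  | tr {a b : A} (r : CPath R a b) : RwStep (CPath.τ r (CPath.σ r)) (CPath.ρ a)
  | tsr {a b : A} (r : CPath R a b) : RwStep (CPath.τ (CPath.σ r) r) (CPath.ρ b)
  | trr {a b : A} (r : CPath R a b) : RwStep (CPath.τ r (CPath.ρ b)) r
  | tlr {a b : A} (r : CPath R a b) : RwStep (CPath.τ (CPath.ρ a) r) r
  | tt {a b c d : A} (t : CPath R a b) (r : CPath R b c) (s : CPath R c d) :
      RwStep (CPath.τ (CPath.τ t r) s) (CPath.τ t (CPath.τ r s))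
  | σ_congr {a b : A} {r r' : CPath R a b} :
      RwStep r r' → RwStep (CPath.σ r) (CPath.σ r')
  | τ_congr_left {a b c : A} {r r' : CPath R a b} (s : CPath R b c) :
      RwStep r r' → RwStep (CPath.τ r s) (CPath.τ r' s)
  | τ_congr_right {a b c : A} (r : CPath R a b) {s s' : CPath R b c} :
      RwStep s s' → RwStep (CPath.τ r s) (CPath.τ r s')

/-- rw-equality `=rw`: the reflexive–symmetric–transitive closure of `▷₁rw`. -/
def RwEq {A : Type u} {R : A → A → Type v} {a b : A} :
    CPath R a b → CPath R a b → Prop :=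
  Relation.EqvGen (@RwStep A R a b)

/-- rw-reduction `▷rw`: the reflexive–transitive closure of `▷₁rw`. -/
def RwRed {A : Type u} {R : A → A → Type v} {a b : A} :
    CPath R a b → CPath R a b → Prop :=
  Relation.ReflTransGen (@RwStep A R a b)


section Aux
variable {A : Type u} {R : A → A → Type v}

theorem rweq_of_step {a b : A} {r s : CPath R a b} (h : RwStep r s) : RwEq r s :=
  Relation.EqvGen.rel _ _ h

theorem rweq_refl {a b : A} (r : CPath R a b) : RwEq r r := Relation.EqvGen.refl r
theorem rweq_symm {a b : A} {r s : CPath R a b} (h : RwEq r s) : RwEq s r :=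
  Relation.EqvGen.symm _ _ h
theorem rweq_trans {a b : A} {r s t : CPath R a b} (h : RwEq r s) (h' : RwEq s t) :
    RwEq r t := Relation.EqvGen.trans _ _ _ h h'

theorem rweq_sigma {a b : A} {r s : CPath R a b} (h : RwEq r s) :
    RwEq (CPath.σ r) (CPath.σ s) := by
  induction h with
  | rel _ _ h => exact rweq_of_step (RwStep.σ_congr h)
  | refl x => exact rweq_refl _
  | symm _ _ _ ih => exact rweq_symm ih
  | trans _ _ _ _ _ ih1 ih2 => exact rweq_trans ih1 ih2

theorem rweq_tau_left {a b c : A} {r s : CPath R a b} (t : CPath R b c) (h : RwEq r s) :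
    RwEq (CPath.τ r t) (CPath.τ s t) := by
  induction h with
  | rel _ _ h => exact rweq_of_step (RwStep.τ_congr_left _ h)
  | refl x => exact rweq_refl _
  | symm _ _ _ ih => exact rweq_symm ih
  | trans _ _ _ _ _ ih1 ih2 => exact rweq_trans ih1 ih2

theorem rweq_tau_right {a b c : A} (r : CPath R a b) {s t : CPath R b c} (h : RwEq s t) :
    RwEq (CPath.τ r s) (CPath.τ r t) := by
  induction h with
  | rel _ _ h => exact rweq_of_step (RwStep.τ_congr_right _ h)
  | refl x => exact rweq_refl _
  | symm _ _ _ ih => exact rweq_symm ih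
  | trans _ _ _ _ _ ih1 ih2 => exact rweq_trans ih1 ih2

def qcomp {a b c : A} (f : Quot (@RwEq A R a b)) (g : Quot (@RwEq A R b c)) :
    Quot (@RwEq A R a c) :=
  Quot.lift (fun s => Quot.lift (fun t => Quot.mk _ (CPath.τ s t))
      (fun t t' h => Quot.sound (rweq_tau_right s h)) g)
    (fun s s' h => by
      induction g using Quot.ind with
      | _ t => exact Quot.sound (rweq_tau_left t h)) f

def qinv {a b : A} (f : Quot (@RwEq A R a b)) : Quot (@RwEq A R b a) :=
  Quot.lift (fun s => Quot.mk _ (CPath.σ s))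
    (fun s s' h => Quot.sound (rweq_sigma h)) f

end Aux

/-- computational paths induce a groupoid structure on `A`:
objects are the elements of `A`, morphisms from `a` to `b` are rw-equivalence
classes of paths, composition is induced by `τ`, the identity at `a` by `ρ_a`,
and the inverse of `[s]` is `[σ(s)]`; composition, identity and inverse are well
defined on rw-equivalence classes (they send representatives as prescribed),
associativity and the unit laws hold, and every morphism is an isomorphism with
inverse `[σ(s)]`. -/
theorem paths_induce_groupoid {A : Type u} (R : A → A → Type v) :
    ∃ (comp : ∀ {a b c : A}, Quot (@RwEq A R a b) → Quot (@RwEq A R b c) →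
        Quot (@RwEq A R a c))
      (idm : ∀ a : A, Quot (@RwEq A R a a))
      (inv : ∀ {a b : A}, Quot (@RwEq A R a b) → Quot (@RwEq A R b a)),
      -- the operations are induced by τ, ρ and σ on representatives
      (∀ {a b c : A} (s : CPath R a b) (t : CPath R b c),
        comp (Quot.mk _ s) (Quot.mk _ t) = Quot.mk _ (CPath.τ s t)) ∧
      (∀ a : A, idm a = Quot.mk _ (CPath.ρ a)) ∧
      (∀ {a b : A} (s : CPath R a b),
        inv (Quot.mk _ s) = Quot.mk _ (CPath.σ s)) ∧
      -- associativity
      (∀ {a b c d : A} (f : Quot (@RwEq A R a b)) (g : Quot (@RwEq A R b c))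
        (h : Quot (@RwEq A R c d)), comp (comp f g) h = comp f (comp g h)) ∧
      -- unit laws
      (∀ {a b : A} (f : Quot (@RwEq A R a b)), comp (idm a) f = f) ∧
      (∀ {a b : A} (f : Quot (@RwEq A R a b)), comp f (idm b) = f) ∧
      -- every morphism is an isomorphism with the prescribed inverse
      (∀ {a b : A} (f : Quot (@RwEq A R a b)), comp f (inv f) = idm a) ∧
      (∀ {a b : A} (f : Quot (@RwEq A R a b)), comp (inv f) f = idm b) := by
  
  refine ⟨@qcomp A R, fun a => Quot.mk _ (CPath.ρ a), @qinv A R,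
    fun s t => rfl, fun a => rfl, fun s => rfl, ?_, ?_, ?_, ?_, ?_⟩
  · intro a b c d f g h
    induction f using Quot.ind with | _ s =>
    induction g using Quot.ind with | _ t =>
    induction h using Quot.ind with | _ u =>
    exact Quot.sound (rweq_of_step (RwStep.tt s t u))
  · intro a b f
    induction f using Quot.ind with | _ s =>
    exact Quot.sound (rweq_of_step (RwStep.tlr s))
  · intro a b f
    induction f using Quot.ind with | _ s =>
    exact Quot.sound (rweq_of_step (RwStep.trr s))
  · intro a b f
    induction f using Quot.ind with | _ s =>
    exact Quot.sound (rweq_of_step (RwStep.tr s))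
  · intro a b f
    induction f using Quot.ind with | _ s =>
    exact Quot.sound (rweq_of_step (RwStep.tsr s))
end

section
/- The rewriting system on computational paths is terminating: the one-step rw-contraction relation ▷₁rw is well-founded, i.e., there is no infinite sequence of paths p₀ ▷₁rw p₁ ▷₁rw p₂ ▷₁rw ⋯ of successive rw-contractions. -/
universe u v

/-- Weight measure decreasing under `RwStep`. -/
def cweight {A : Type u} {R : A → A → Type v} : ∀ {a b : A}, CPath R a b → ℕ
  | _, _, CPath.gen _ => 1
  | _, _, CPath.ρ _ => 1
  | _, _, CPath.σ r => cweight r + 1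
  | _, _, CPath.τ r s => 2 * cweight r + cweight s

theorem cweight_pos {A : Type u} {R : A → A → Type v} {a b : A}
    (r : CPath R a b) : 0 < cweight r := by
  induction r with
  | gen _ => simp [cweight]
  | ρ _ => simp [cweight]
  | σ r ih => simp [cweight]
  | τ r s ih1 ih2 => simp [cweight]; omega

theorem cweight_lt {A : Type u} {R : A → A → Type v} {a b : A}
    {p q : CPath R a b} (h : RwStep p q) : cweight q < cweight p := by
  induction h with
  | sr => simp [cweight]
  | ss r => simp [cweight]
  | tr r => have := cweight_pos r; simp [cweight]; omega
  | tsr r => have := cweight_pos r; simp [cweight]; omega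
  | trr r => have := cweight_pos r; simp [cweight]; omega
  | tlr r => simp [cweight]
  | tt t r s => have := cweight_pos t; simp [cweight]; omega
  | σ_congr _ ih => simp [cweight]; omega
  | τ_congr_left _ _ ih => simp [cweight]; omega
  | τ_congr_right _ _ ih => simp [cweight]; omega

/-- the rewriting system on computational paths is terminating:
one-step rw-contraction is well-founded, i.e. there is no infinite sequence
`p₀ ▷₁rw p₁ ▷₁rw p₂ ▷₁rw ⋯` of successive rw-contractions. -/
theorem step_terminating {A : Type u} {R : A → A → Type v} (a b : A) :
    WellFounded (fun t s : CPath R a b => RwStep s t) ∧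
    ¬ ∃ f : ℕ → CPath R a b, ∀ n : ℕ, RwStep (f n) (f (n + 1)) := by
  have hwf : WellFounded (fun t s : CPath R a b => RwStep s t) := by
    have : Subrelation (fun t s : CPath R a b => RwStep s t)
        (InvImage Nat.lt cweight) := fun h => cweight_lt h
    exact Subrelation.wf this (InvImage.wf cweight Nat.lt_wfRel.wf)
  refine ⟨hwf, ?_⟩
  rintro ⟨f, hf⟩
  have hlt : ∀ n, cweight (f (n + 1)) < cweight (f n) := fun n => cweight_lt (hf n)
  have key : ∀ n, cweight (f n) + n ≤ cweight (f 0) := by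
    intro n; induction n with
    | zero => omega
    | succ k ih => have := hlt k; omega
  have := key (cweight (f 0) + 1)
  omega
end

section
/- For fixed elements a b : A, the structure A₂rw(a,b) modulo rw₂-equality is a groupoid: taking as objects the computational paths s : Path a b, as morphisms from s to t the quotient of Deriv s t by rw₂-equality, with composition of [θ] : s → t and [φ] : t → u given by [τ₂(θ,φ)], identity at s given by [ρ₂], and inverse of [θ] given by [σ₂(θ)], one obtains a groupoid (composition and inversion are well defined on rw₂-equivalence classes, associativity and the unit laws hold, and every morphism is an isomorphism). -/
universe u v

/-- rw-derivations between paths `s t : CPath R a b`: generators are one-step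
rw-contractions, plus reflexivity `ρ₂`, symmetry `σ₂` and transitivity `τ₂`. -/
inductive RwDeriv {A : Type u} {R : A → A → Type v} {a b : A} :
    CPath R a b → CPath R a b → Type (max u v)
  | gen {s t : CPath R a b} : RwStep s t → RwDeriv s t
  | ρ₂ (s : CPath R a b) : RwDeriv s s
  | σ₂ {s t : CPath R a b} : RwDeriv s t → RwDeriv t s
  | τ₂ {s t u : CPath R a b} : RwDeriv s t → RwDeriv t u → RwDeriv s u

/-- One-step rw₂-contraction on rw-derivations: congruence closure (under `σ₂`
and `τ₂`) of the seven rules sr₂, ss₂, tr₂, tsr₂, trr₂, tlr₂, tt₂. -/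
inductive RwStep₂ {A : Type u} {R : A → A → Type v} {a b : A} :
    ∀ {s t : CPath R a b}, RwDeriv s t → RwDeriv s t → Prop
  | sr₂ {s : CPath R a b} : RwStep₂ (RwDeriv.σ₂ (RwDeriv.ρ₂ s)) (RwDeriv.ρ₂ s)
  | ss₂ {s t : CPath R a b} (θ : RwDeriv s t) : RwStep₂ (RwDeriv.σ₂ (RwDeriv.σ₂ θ)) θ
  | tr₂ {s t : CPath R a b} (θ : RwDeriv s t) :
      RwStep₂ (RwDeriv.τ₂ θ (RwDeriv.σ₂ θ)) (RwDeriv.ρ₂ s)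
  | tsr₂ {s t : CPath R a b} (θ : RwDeriv s t) :
      RwStep₂ (RwDeriv.τ₂ (RwDeriv.σ₂ θ) θ) (RwDeriv.ρ₂ t)
  | trr₂ {s t : CPath R a b} (θ : RwDeriv s t) : RwStep₂ (RwDeriv.τ₂ θ (RwDeriv.ρ₂ t)) θ
  | tlr₂ {s t : CPath R a b} (θ : RwDeriv s t) : RwStep₂ (RwDeriv.τ₂ (RwDeriv.ρ₂ s) θ) θ
  | tt₂ {s₁ s₂ s₃ s₄ : CPath R a b} (θ : RwDeriv s₁ s₂) (φ : RwDeriv s₂ s₃)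
      (ψ : RwDeriv s₃ s₄) :
      RwStep₂ (RwDeriv.τ₂ (RwDeriv.τ₂ θ φ) ψ) (RwDeriv.τ₂ θ (RwDeriv.τ₂ φ ψ))
  | σ₂_congr {s t : CPath R a b} {θ θ' : RwDeriv s t} :
      RwStep₂ θ θ' → RwStep₂ (RwDeriv.σ₂ θ) (RwDeriv.σ₂ θ')
  | τ₂_congr_left {s t u : CPath R a b} {θ θ' : RwDeriv s t} (φ : RwDeriv t u) :
      RwStep₂ θ θ' → RwStep₂ (RwDeriv.τ₂ θ φ) (RwDeriv.τ₂ θ' φ)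
  | τ₂_congr_right {s t u : CPath R a b} (θ : RwDeriv s t) {φ φ' : RwDeriv t u} :
      RwStep₂ φ φ' → RwStep₂ (RwDeriv.τ₂ θ φ) (RwDeriv.τ₂ θ φ')

/-- rw₂-equality `=rw₂`: the reflexive–symmetric–transitive closure of
one-step rw₂-contraction. -/
def RwEq₂ {A : Type u} {R : A → A → Type v} {a b : A} {s t : CPath R a b} :
    RwDeriv s t → RwDeriv s t → Prop :=
  Relation.EqvGen (@RwStep₂ A R a b s t)

section Helpers
variable {A : Type u} {R : A → A → Type v} {a b : A}

lemma RwEq₂.σ₂_congr {s t : CPath R a b} {θ θ' : RwDeriv s t}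
    (h : RwEq₂ θ θ') : RwEq₂ (RwDeriv.σ₂ θ) (RwDeriv.σ₂ θ') := by
  induction h with
  | rel _ _ h => exact Relation.EqvGen.rel _ _ (RwStep₂.σ₂_congr h)
  | refl _ => exact Relation.EqvGen.refl _
  | symm _ _ _ ih => exact Relation.EqvGen.symm _ _ ih
  | trans _ _ _ _ _ ih1 ih2 => exact Relation.EqvGen.trans _ _ _ ih1 ih2

lemma RwEq₂.τ₂_congr {s t u : CPath R a b} {θ θ' : RwDeriv s t}
    {φ φ' : RwDeriv t u} (h1 : RwEq₂ θ θ') (h2 : RwEq₂ φ φ') :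
    RwEq₂ (RwDeriv.τ₂ θ φ) (RwDeriv.τ₂ θ' φ') := by
  have l : RwEq₂ (RwDeriv.τ₂ θ φ) (RwDeriv.τ₂ θ' φ) := by
    induction h1 with
    | rel _ _ h => exact Relation.EqvGen.rel _ _ (RwStep₂.τ₂_congr_left _ h)
    | refl _ => exact Relation.EqvGen.refl _
    | symm _ _ _ ih => exact Relation.EqvGen.symm _ _ ih
    | trans _ _ _ _ _ ih1 ih2 => exact Relation.EqvGen.trans _ _ _ ih1 ih2
  have r : RwEq₂ (RwDeriv.τ₂ θ' φ) (RwDeriv.τ₂ θ' φ') := by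
    clear l
    induction h2 with
    | rel _ _ h => exact Relation.EqvGen.rel _ _ (RwStep₂.τ₂_congr_right _ h)
    | refl _ => exact Relation.EqvGen.refl _
    | symm _ _ _ ih => exact Relation.EqvGen.symm _ _ ih
    | trans _ _ _ _ _ ih1 ih2 => exact Relation.EqvGen.trans _ _ _ ih1 ih2
  exact Relation.EqvGen.trans _ _ _ l r

end Helpers

/-- for fixed `a b : A`, the structure `A₂rw(a,b)` modulo
rw₂-equality is a groupoid: objects are the paths `s : CPath a b`, morphisms
from `s` to `t` are rw₂-equivalence classes of derivations, composition is
induced by `τ₂`, identity at `s` by `ρ₂`, and the inverse of `[θ]` is `[σ₂(θ)]`;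
composition and inversion are well defined on rw₂-equivalence classes,
associativity and the unit laws hold, and every morphism is an isomorphism. -/
theorem derivations_induce_groupoid {A : Type u} {R : A → A → Type v}
    (a b : A) :
    ∃ (comp : ∀ {s t u : CPath R a b}, Quot (@RwEq₂ A R a b s t) →
        Quot (@RwEq₂ A R a b t u) → Quot (@RwEq₂ A R a b s u))
      (idm : ∀ s : CPath R a b, Quot (@RwEq₂ A R a b s s))
      (inv : ∀ {s t : CPath R a b}, Quot (@RwEq₂ A R a b s t) →
        Quot (@RwEq₂ A R a b t s)),
      -- the operations are induced by τ₂, ρ₂ and σ₂ on representatives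
      (∀ {s t u : CPath R a b} (θ : RwDeriv s t) (φ : RwDeriv t u),
        comp (Quot.mk _ θ) (Quot.mk _ φ) = Quot.mk _ (RwDeriv.τ₂ θ φ)) ∧
      (∀ s : CPath R a b, idm s = Quot.mk _ (RwDeriv.ρ₂ s)) ∧
      (∀ {s t : CPath R a b} (θ : RwDeriv s t),
        inv (Quot.mk _ θ) = Quot.mk _ (RwDeriv.σ₂ θ)) ∧
      -- associativity
      (∀ {s t u w : CPath R a b} (f : Quot (@RwEq₂ A R a b s t))
        (g : Quot (@RwEq₂ A R a b t u)) (h : Quot (@RwEq₂ A R a b u w)),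
        comp (comp f g) h = comp f (comp g h)) ∧
      -- unit laws
      (∀ {s t : CPath R a b} (f : Quot (@RwEq₂ A R a b s t)),
        comp (idm s) f = f) ∧
      (∀ {s t : CPath R a b} (f : Quot (@RwEq₂ A R a b s t)),
        comp f (idm t) = f) ∧
      -- every morphism is an isomorphism with the prescribed inverse
      (∀ {s t : CPath R a b} (f : Quot (@RwEq₂ A R a b s t)),
        comp f (inv f) = idm s) ∧
      (∀ {s t : CPath R a b} (f : Quot (@RwEq₂ A R a b s t)),
        comp (inv f) f = idm t) := by
  refine ⟨fun {s t u} f g =>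
      Quot.lift (fun θ => Quot.lift (fun φ => Quot.mk _ (RwDeriv.τ₂ θ φ))
        (fun φ φ' h => Quot.sound (RwEq₂.τ₂_congr (Relation.EqvGen.refl _) h)) g)
      (fun θ θ' h => by
        induction g using Quot.ind with
        | _ φ => exact Quot.sound (RwEq₂.τ₂_congr h (Relation.EqvGen.refl _))) f,
    fun s => Quot.mk _ (RwDeriv.ρ₂ s),
    fun {s t} f => Quot.lift (fun θ => Quot.mk _ (RwDeriv.σ₂ θ))
      (fun θ θ' h => Quot.sound (RwEq₂.σ₂_congr h)) f,
    fun θ φ => rfl, fun s => rfl, fun θ => rfl,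
    ?_, ?_, ?_, ?_, ?_⟩
  · intro s t u w f g h
    induction f using Quot.ind with | _ θ =>
    induction g using Quot.ind with | _ φ =>
    induction h using Quot.ind with | _ ψ =>
    exact Quot.sound (Relation.EqvGen.rel _ _ (RwStep₂.tt₂ θ φ ψ))
  · intro s t f
    induction f using Quot.ind with | _ θ =>
    exact Quot.sound (Relation.EqvGen.rel _ _ (RwStep₂.tlr₂ θ))
  · intro s t f
    induction f using Quot.ind with | _ θ =>
    exact Quot.sound (Relation.EqvGen.rel _ _ (RwStep₂.trr₂ θ))
  · intro s t f
    induction f using Quot.ind with | _ θ =>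
    exact Quot.sound (Relation.EqvGen.rel _ _ (RwStep₂.tr₂ θ))
  · intro s t f
    induction f using Quot.ind with | _ θ =>
    exact Quot.sound (Relation.EqvGen.rel _ _ (RwStep₂.tsr₂ θ))
end

section
/- Mac Lane's pentagon commutes at the level of rw-reduction: for composable paths s : Path a b, r : Path b c, p : Path c d and u : Path d e, both routes of the pentagon rw-reduce the path τ(s,τ(r,τ(p,u))) to the same path τ(τ(τ(s,r),p),u); concretely, the two-step route τ(s,τ(r,τ(p,u))) ▷ τ(τ(s,r),τ(p,u)) ▷ τ(τ(τ(s,r),p),u) and the three-step route τ(s,τ(r,τ(p,u))) ▷ τ(s,τ(τ(r,p),u)) ▷ τ(τ(s,τ(r,p)),u) ▷ τ(τ(τ(s,r),p),u), each step being an inverse application of the tt rule (possibly inside a congruence context), are both valid rw-reduction sequences ending at the same path. -/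
universe u v

/-- Mac Lane's pentagon commutes at the level of rw-reduction:
both routes of the pentagon take `τ(s,τ(r,τ(p,q)))` to the same path
`τ(τ(τ(s,r),p),q)`, each step being an inverse application of the `tt` rule
(possibly inside a congruence context); each such inverse application is
witnessed below by a forward one-step rw-contraction in the opposite
direction, and both routes end at the same path, so the two sides are
rw-equal. -/
theorem pentagon_commutes {A : Type u} {R : A → A → Type v} {a b c d e : A}
    (s : CPath R a b) (r : CPath R b c) (p : CPath R c d) (q : CPath R d e) :
    -- route 1: τ(s,τ(r,τ(p,q))) ▷⁻¹ τ(τ(s,r),τ(p,q)) ▷⁻¹ τ(τ(τ(s,r),p),q)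
    RwStep (CPath.τ (CPath.τ s r) (CPath.τ p q)) (CPath.τ s (CPath.τ r (CPath.τ p q))) ∧
    RwStep (CPath.τ (CPath.τ (CPath.τ s r) p) q) (CPath.τ (CPath.τ s r) (CPath.τ p q)) ∧
    -- route 2: τ(s,τ(r,τ(p,q))) ▷⁻¹ τ(s,τ(τ(r,p),q)) ▷⁻¹ τ(τ(s,τ(r,p)),q)
    --          ▷⁻¹ τ(τ(τ(s,r),p),q)
    RwStep (CPath.τ s (CPath.τ (CPath.τ r p) q)) (CPath.τ s (CPath.τ r (CPath.τ p q))) ∧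
    RwStep (CPath.τ (CPath.τ s (CPath.τ r p)) q) (CPath.τ s (CPath.τ (CPath.τ r p) q)) ∧
    RwStep (CPath.τ (CPath.τ (CPath.τ s r) p) q) (CPath.τ (CPath.τ s (CPath.τ r p)) q) ∧
    -- hence both routes end at the same path, and the endpoints are rw-equal
    RwEq (CPath.τ s (CPath.τ r (CPath.τ p q))) (CPath.τ (CPath.τ (CPath.τ s r) p) q) := by
  refine ⟨RwStep.tt s r (CPath.τ p q), RwStep.tt (CPath.τ s r) p q,
    RwStep.τ_congr_right s (RwStep.tt r p q),
    RwStep.tt s (CPath.τ r p) q,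
    RwStep.τ_congr_left q (RwStep.tt s r p), ?_⟩
  exact Relation.EqvGen.trans _ _ _
    (Relation.EqvGen.symm _ _ (Relation.EqvGen.rel _ _ (RwStep.tt s r (CPath.τ p q))))
    (Relation.EqvGen.symm _ _ (Relation.EqvGen.rel _ _ (RwStep.tt (CPath.τ s r) p q)))
end

section
/- Mac Lane's triangle commutes at the level of rw-reduction: for paths s : Path a b and r : Path b c, both routes of the triangle identify τ(s,τ(ρ_b,r)) with τ(s,r); concretely, the route that first applies the inverse tt rule to obtain τ(τ(s,ρ_b),r) and then the trr rule inside the left component to obtain τ(s,r), and the direct route that applies the tlr rule inside the right component to obtain τ(s,r), are both valid sequences of rw-contractions and inverse rw-contractions ending at the same path τ(s,r); in particular τ(s,τ(ρ_b,r)) =rw τ(s,r). -/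
universe u v

/-- Mac Lane's triangle commutes at the level of rw-reduction:
the route applying the inverse `tt` rule (to get `τ(τ(s,ρ_b),r)`) followed by
`trr` inside the left component, and the direct route applying `tlr` inside the
right component, both end at the same path `τ(s,r)`; in particular
`τ(s,τ(ρ_b,r)) =rw τ(s,r)`. -/
theorem triangle_commutes {A : Type u} {R : A → A → Type v} {a b c : A}
    (s : CPath R a b) (r : CPath R b c) :
    -- inverse tt step: τ(s,τ(ρ_b,r)) ▷⁻¹ τ(τ(s,ρ_b),r)
    RwStep (CPath.τ (CPath.τ s (CPath.ρ b)) r) (CPath.τ s (CPath.τ (CPath.ρ b) r)) ∧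
    -- trr inside the left component: τ(τ(s,ρ_b),r) ▷ τ(s,r)
    RwStep (CPath.τ (CPath.τ s (CPath.ρ b)) r) (CPath.τ s r) ∧
    -- tlr inside the right component: τ(s,τ(ρ_b,r)) ▷ τ(s,r)
    RwStep (CPath.τ s (CPath.τ (CPath.ρ b) r)) (CPath.τ s r) ∧
    -- both routes end at τ(s,r)
    RwEq (CPath.τ s (CPath.τ (CPath.ρ b) r)) (CPath.τ s r) := by
  exact ⟨RwStep.tt s (CPath.ρ b) r,
    RwStep.τ_congr_left r (RwStep.trr s),
    RwStep.τ_congr_right s (RwStep.tlr r),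
    Relation.EqvGen.rel _ _ (RwStep.τ_congr_right s (RwStep.tlr r))⟩
end
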